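/- Let a ∈ ℝ, h⁺, h⁻ ≥ 0 with a = h⁺ - h⁻, and let z ∈ {0,1} satisfy the indicator constraints (z = 1 → h⁺ = 0) and (z = 0 → h⁻ = 0). Then h⁺ = max(0, a). In particular the binary-indicator formulation of a ReLU neuron is exact. -/
import Mathlib

/-- Binary-indicator MILP formulation of a ReLU neuron is exact. -/
theorem relu_indicator_exact (a hp hn z : ℝ)
    (hhp : 0 ≤ hp) (hhn : 0 ≤ hn) (hsplit : a = hp - hn)
    (hz : z = 0 ∨ z = 1)
    (h1 : z = 1 → hp = 0) (h0 : z = 0 → hn = 0) :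
    hp = max 0 a := by
  rcases hz with h | h
  · rw [h0 h] at hsplit; rw [max_eq_right (by linarith)]; linarith
  · have hp0 := h1 h; rw [max_eq_left (by nlinarith)]; exact hp0
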